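/- arXiv:1803.07625 — 4 statements merged into one kernel-verified Lean document; each statement's English description precedes it below -/
import Mathlib

section
/- Let x̂ ∈ ℝⁿ, ŷ ∈ ℝᵐ, Ŵ ∈ ℝ^{n×m}, and let u ∈ ℝⁿ, v ∈ ℝᵐ be unit vectors with (Ŵ − x̂ŷᵀ)v = σu and (Ŵ − x̂ŷᵀ)ᵀu = σv for some σ > 0 (so u, v are a left/right singular-vector pair of Ŵ − x̂ŷᵀ for the positive singular value σ). Set z := (1/√2)·(u; v) ∈ ℝ^{n+m}. Then for every x ∈ ℝⁿ, y ∈ ℝᵐ, W ∈ ℝ^{n×m} and symmetric matrices X ∈ ℝ^{n×n}, Y ∈ ℝ^{m×m} such that X − xxᵀ and Y − yyᵀ are positive semidefinite, the following implication holds: if the block matrix H := [[X, W],[Wᵀ, Y]] ∈ ℝ^{(n+m)×(n+m)} and h := (x; y) ∈ ℝ^{n+m} satisfy ⟨zzᵀ, H⟩ − (zᵀh)² ≤ 0, then ⟨uvᵀ, W⟩ − (uᵀx)(vᵀy) ≤ 0. (That is, the symmetric valid inequality ⟨zzᵀ, H⟩ − (zᵀh)² ≤ 0 together with the positive-semidefiniteness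 constraints is at least as strong as the bilinear valid inequality ⟨uvᵀ, W⟩ − (uᵀx)(vᵀy) ≤ 0.) -/
/-!
With `s := (u; v)` and `z = s / √2`, one has `⟨zzᵀ, H⟩ = ½ (uᵀXu + 2 uᵀWv + vᵀYv)` and
`(zᵀh)² = ½ (uᵀx + vᵀy)²`. Positive semidefiniteness of `X - xxᵀ` and `Y - yyᵀ` gives
`uᵀXu ≥ (uᵀx)²` and `vᵀYv ≥ (vᵀy)²`; subtracting these from the symmetric inequality leaves
`2 uᵀWv ≤ 2 (uᵀx)(vᵀy)`.
-/

open Matrix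

section
variable {ι κ R : Type*} [Fintype ι] [Fintype κ] [CommSemiring R]

lemma trace_transpose_vecMulVec_mul (a : ι → R) (b : κ → R) (M : Matrix ι κ R) :
    ((vecMulVec a b)ᵀ * M).trace = a ⬝ᵥ (M *ᵥ b) := by
  rw [transpose_vecMulVec, vecMulVec_mul, trace_vecMulVec, dotProduct_mulVec, dotProduct_comm]

lemma dotProduct_vecMulVec_mulVec (u x : ι → R) (y v : κ → R) :
    u ⬝ᵥ (vecMulVec x y *ᵥ v) = (u ⬝ᵥ x) * (y ⬝ᵥ v) := by
  rw [vecMulVec_mulVec, op_smul_eq_smul, dotProduct_smul, smul_eq_mul, mul_comm]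

lemma sumElim_dotProduct_fromBlocks_mulVec_sumElim (X : Matrix ι ι R) (W : Matrix ι κ R)
    (Y : Matrix κ κ R) (u : ι → R) (v : κ → R) :
    Sum.elim u v ⬝ᵥ (fromBlocks X W Wᵀ Y *ᵥ Sum.elim u v) =
      u ⬝ᵥ (X *ᵥ u) + 2 * (u ⬝ᵥ (W *ᵥ v)) + v ⬝ᵥ (Y *ᵥ v) := by
  rw [fromBlocks_mulVec, sumElim_dotProduct_sumElim]
  simp only [Sum.elim_comp_inl, Sum.elim_comp_inr, dotProduct_add, mulVec_transpose,
    ← dotProduct_mulVec, dotProduct_comm v (u ᵥ* W)]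
  ring

end

lemma sq_dotProduct_le_of_posSemidef_sub_vecMulVec {ι : Type*} [Fintype ι]
    {X : Matrix ι ι ℝ} {x : ι → ℝ} (h : (X - vecMulVec x x).PosSemidef) (u : ι → ℝ) :
    (u ⬝ᵥ x) ^ 2 ≤ u ⬝ᵥ (X *ᵥ u) := by
  have := h.dotProduct_mulVec_nonneg u
  rw [star_trivial, sub_mulVec, dotProduct_sub, dotProduct_vecMulVec_mulVec,
    dotProduct_comm x u] at this
  linarith [sq (u ⬝ᵥ x)]

theorem stmt0_general {n m : ℕ}
    (u : Fin n → ℝ) (v : Fin m → ℝ)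
    (z : Fin n ⊕ Fin m → ℝ)
    (hz : z = (Real.sqrt 2)⁻¹ • Sum.elim u v) :
    ∀ (x : Fin n → ℝ) (y : Fin m → ℝ) (W : Matrix (Fin n) (Fin m) ℝ)
      (X : Matrix (Fin n) (Fin n) ℝ) (Y : Matrix (Fin m) (Fin m) ℝ),
      X.IsSymm → Y.IsSymm →
      (X - vecMulVec x x).PosSemidef → (Y - vecMulVec y y).PosSemidef →
      (((vecMulVec z z)ᵀ * fromBlocks X W Wᵀ Y).trace
          - (z ⬝ᵥ Sum.elim x y) ^ 2 ≤ 0) →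
      ((vecMulVec u v)ᵀ * W).trace - (u ⬝ᵥ x) * (v ⬝ᵥ y) ≤ 0 := by
  intro x y W X Y _ _ hX hY hsymm
  have hc : (Real.sqrt 2)⁻¹ * (Real.sqrt 2)⁻¹ = 1 / 2 := by
    rw [← mul_inv, Real.mul_self_sqrt zero_le_two, one_div]
  have hquad : u ⬝ᵥ (X *ᵥ u) + 2 * (u ⬝ᵥ (W *ᵥ v)) + v ⬝ᵥ (Y *ᵥ v)
      ≤ (u ⬝ᵥ x + v ⬝ᵥ y) ^ 2 := by
    rw [trace_transpose_vecMulVec_mul, hz, mulVec_smul, smul_dotProduct, dotProduct_smul,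
      smul_dotProduct, sumElim_dotProduct_fromBlocks_mulVec_sumElim, sumElim_dotProduct_sumElim,
      smul_eq_mul, smul_eq_mul, smul_eq_mul, mul_pow, ← mul_assoc, sq (Real.sqrt 2)⁻¹, hc]
      at hsymm
    linarith
  rw [trace_transpose_vecMulVec_mul]
  nlinarith [sq_dotProduct_le_of_posSemidef_sub_vecMulVec hX u,
    sq_dotProduct_le_of_posSemidef_sub_vecMulVec hY v]

/-- the symmetric valid inequality `⟨zz', H⟩ - (z'h)² ≤ 0` together with
positive-semidefiniteness of `X - xx'` and `Y - yy'` implies the bilinear valid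
inequality `⟨uv', W⟩ - (u'x)(v'y) ≤ 0`, where `z := (1/√2)(u; v)` comes from a
left/right singular-vector pair of `Ŵ - x̂ŷ'` for a positive singular value `σ`. -/
theorem stmt0 {n m : ℕ}
    (xh : Fin n → ℝ) (yh : Fin m → ℝ) (Wh : Matrix (Fin n) (Fin m) ℝ)
    (u : Fin n → ℝ) (v : Fin m → ℝ) (σ : ℝ)
    (hu : u ⬝ᵥ u = 1) (hv : v ⬝ᵥ v = 1) (hσ : 0 < σ)
    (hMv : (Wh - vecMulVec xh yh) *ᵥ v = σ • u)
    (hMu : (Wh - vecMulVec xh yh)ᵀ *ᵥ u = σ • v)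
    (z : Fin n ⊕ Fin m → ℝ)
    (hz : z = (Real.sqrt 2)⁻¹ • Sum.elim u v) :
    ∀ (x : Fin n → ℝ) (y : Fin m → ℝ) (W : Matrix (Fin n) (Fin m) ℝ)
      (X : Matrix (Fin n) (Fin n) ℝ) (Y : Matrix (Fin m) (Fin m) ℝ),
      X.IsSymm → Y.IsSymm →
      (X - vecMulVec x x).PosSemidef → (Y - vecMulVec y y).PosSemidef →
      (((vecMulVec z z)ᵀ * fromBlocks X W Wᵀ Y).trace
          - (z ⬝ᵥ Sum.elim x y) ^ 2 ≤ 0) →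
      ((vecMulVec u v)ᵀ * W).trace - (u ⬝ᵥ x) * (v ⬝ᵥ y) ≤ 0 :=
  stmt0_general u v z hz
end

section
/- Let x̂ ∈ ℝⁿ, ŷ ∈ ℝᵐ, Ŵ ∈ ℝ^{n×m}, and let aₓ, bₓ ∈ ℝⁿ and a_y, b_y ∈ ℝᵐ satisfy aₓ ≤ x̂ ≤ bₓ and a_y ≤ ŷ ≤ b_y componentwise. Suppose Ŵ satisfies the McCormick inequalities: for all i ∈ {1,…,n}, j ∈ {1,…,m}: Ŵ_{ij} − b_{y,j}x̂_i − a_{x,i}ŷ_j + a_{x,i}b_{y,j} ≤ 0; Ŵ_{ij} − a_{y,j}x̂_i − b_{x,i}ŷ_j + b_{x,i}a_{y,j} ≤ 0; Ŵ_{ij} − a_{y,j}x̂_i − a_{x,i}ŷ_j + a_{x,i}a_{y,j} ≥ 0; Ŵ_{ij} − b_{y,j}x̂_i − b_{x,i}ŷ_j + b_{x,i}b_{y,j} ≥ 0. Define ĥ := (x̂; ŷ) ∈ ℝ^{n+m}, Ĥ := [[x̂x̂ᵀ, Ŵ],[Ŵᵀ, ŷŷᵀ]] ∈ ℝ^{(n+m)×(n+m)},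 a_h := (aₓ; a_y), b_h := (bₓ; b_y). Then a_h ≤ ĥ ≤ b_h componentwise, and for all i, j ∈ {1,…,n+m}: Ĥ_{ij} − b_{h,j}ĥ_i − a_{h,i}ĥ_j + a_{h,i}b_{h,j} ≤ 0; Ĥ_{ij} − a_{h,j}ĥ_i − b_{h,i}ĥ_j + b_{h,i}a_{h,j} ≤ 0; Ĥ_{ij} − a_{h,j}ĥ_i − a_{h,i}ĥ_j + a_{h,i}a_{h,j} ≥ 0; Ĥ_{ij} − b_{h,j}ĥ_i − b_{h,i}ĥ_j + b_{h,i}b_{h,j} ≥ 0. (That is, (ĥ, Ĥ) is a feasible solution of the symmetric McCormick relaxation.) -/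
/-!
On a product of boxes the outer product `x yᵀ` satisfies every McCormick inequality, since
each of them reads `(xᵢ - ·)(yⱼ - ·)` with factors of known sign. The McCormick inequalities
for `Wᵀ` are those for `W` with the two overestimators swapped, and the inequalities for a
block matrix hold blockwise. So the diagonal blocks `x̂x̂ᵀ`, `ŷŷᵀ` of `Ĥ` are feasible for free
and the off-diagonal blocks `Ŵ`, `Ŵᵀ` by hypothesis.
-/

open Matrix

/-- `W` satisfies the McCormick inequalities for `W = x yᵀ` over the box
`[lx, ux] × [ly, uy]`. -/
structure IsMcCormick {ι κ R : Type*} [CommRing R] [LE R]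
    (lx ux : ι → R) (ly uy : κ → R) (x : ι → R) (y : κ → R) (W : Matrix ι κ R) : Prop where
  over₁ : ∀ i j, W i j - uy j * x i - lx i * y j + lx i * uy j ≤ 0
  over₂ : ∀ i j, W i j - ly j * x i - ux i * y j + ux i * ly j ≤ 0
  under₁ : ∀ i j, W i j - ly j * x i - lx i * y j + lx i * ly j ≥ 0
  under₂ : ∀ i j, W i j - uy j * x i - ux i * y j + ux i * uy j ≥ 0

namespace IsMcCormick

variable {ι κ ι' κ' R : Type*} [CommRing R]

theorem vecMulVec [PartialOrder R] [IsOrderedRing R] {lx ux x : ι → R} {ly uy y : κ → R}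
    (hlx : lx ≤ x) (hux : x ≤ ux) (hly : ly ≤ y) (huy : y ≤ uy) :
    IsMcCormick lx ux ly uy x y (vecMulVec x y) where
  over₁ i j := by
    rw [vecMulVec_apply, show x i * y j - uy j * x i - lx i * y j + lx i * uy j
      = (x i - lx i) * (y j - uy j) by ring]
    exact mul_nonpos_of_nonneg_of_nonpos (sub_nonneg.2 (hlx i)) (sub_nonpos.2 (huy j))
  over₂ i j := by
    rw [vecMulVec_apply, show x i * y j - ly j * x i - ux i * y j + ux i * ly j
      = (x i - ux i) * (y j - ly j) by ring]
    exact mul_nonpos_of_nonpos_of_nonneg (sub_nonpos.2 (hux i)) (sub_nonneg.2 (hly j))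
  under₁ i j := by
    rw [vecMulVec_apply, show x i * y j - ly j * x i - lx i * y j + lx i * ly j
      = (x i - lx i) * (y j - ly j) by ring]
    exact mul_nonneg (sub_nonneg.2 (hlx i)) (sub_nonneg.2 (hly j))
  under₂ i j := by
    rw [vecMulVec_apply, show x i * y j - uy j * x i - ux i * y j + ux i * uy j
      = (ux i - x i) * (uy j - y j) by ring]
    exact mul_nonneg (sub_nonneg.2 (hux i)) (sub_nonneg.2 (huy j))

variable [LE R] {lx ux x : ι → R} {ly uy y : κ → R}

theorem transpose {W : Matrix ι κ R} (h : IsMcCormick lx ux ly uy x y W) :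
    IsMcCormick ly uy lx ux y x Wᵀ where
  over₁ i j := by simpa only [transpose_apply, mul_comm, sub_right_comm] using h.over₂ j i
  over₂ i j := by simpa only [transpose_apply, mul_comm, sub_right_comm] using h.over₁ j i
  under₁ i j := by simpa only [transpose_apply, mul_comm, sub_right_comm] using h.under₁ j i
  under₂ i j := by simpa only [transpose_apply, mul_comm, sub_right_comm] using h.under₂ j i

theorem fromBlocks {lx' ux' x' : ι' → R} {ly' uy' y' : κ' → R}
    {A : Matrix ι κ R} {B : Matrix ι κ' R} {C : Matrix ι' κ R} {D : Matrix ι' κ' R}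
    (hA : IsMcCormick lx ux ly uy x y A) (hB : IsMcCormick lx ux ly' uy' x y' B)
    (hC : IsMcCormick lx' ux' ly uy x' y C) (hD : IsMcCormick lx' ux' ly' uy' x' y' D) :
    IsMcCormick (Sum.elim lx lx') (Sum.elim ux ux') (Sum.elim ly ly') (Sum.elim uy uy')
      (Sum.elim x x') (Sum.elim y y') (Matrix.fromBlocks A B C D) where
  over₁ := by rintro (i | i) (j | j) <;> simp [hA.over₁, hB.over₁, hC.over₁, hD.over₁]
  over₂ := by rintro (i | i) (j | j) <;> simp [hA.over₂, hB.over₂, hC.over₂, hD.over₂]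
  under₁ := by rintro (i | i) (j | j) <;> simp [hA.under₁, hB.under₁, hC.under₁, hD.under₁]
  under₂ := by rintro (i | i) (j | j) <;> simp [hA.under₂, hB.under₂, hC.under₂, hD.under₂]

end IsMcCormick

/-- if `(x̂, ŷ, Ŵ)` satisfies the box constraints and the McCormick
inequalities for `W = xy'`, then the lifted point `(ĥ, Ĥ)` with `ĥ := (x̂; ŷ)` and
`Ĥ := [[x̂x̂', Ŵ],[Ŵ', ŷŷ']]` satisfies the box constraints and the McCormick
inequalities of the symmetric relaxation. -/
theorem stmt7 {n m : ℕ}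
    (xh ax bx : Fin n → ℝ) (yh ay by' : Fin m → ℝ)
    (Wh : Matrix (Fin n) (Fin m) ℝ)
    (hxl : ax ≤ xh) (hxu : xh ≤ bx) (hyl : ay ≤ yh) (hyu : yh ≤ by')
    (hmc1 : ∀ (i : Fin n) (j : Fin m),
      Wh i j - by' j * xh i - ax i * yh j + ax i * by' j ≤ 0)
    (hmc2 : ∀ (i : Fin n) (j : Fin m),
      Wh i j - ay j * xh i - bx i * yh j + bx i * ay j ≤ 0)
    (hmc3 : ∀ (i : Fin n) (j : Fin m),
      Wh i j - ay j * xh i - ax i * yh j + ax i * ay j ≥ 0)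
    (hmc4 : ∀ (i : Fin n) (j : Fin m),
      Wh i j - by' j * xh i - bx i * yh j + bx i * by' j ≥ 0)
    (hv' : Fin n ⊕ Fin m → ℝ) (hhv : hv' = Sum.elim xh yh)
    (Hh : Matrix (Fin n ⊕ Fin m) (Fin n ⊕ Fin m) ℝ)
    (hHh : Hh = fromBlocks (vecMulVec xh xh) Wh Whᵀ (vecMulVec yh yh))
    (ah bh : Fin n ⊕ Fin m → ℝ)
    (hah : ah = Sum.elim ax ay) (hbh : bh = Sum.elim bx by') :
    (ah ≤ hv' ∧ hv' ≤ bh)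
      ∧ (∀ i j : Fin n ⊕ Fin m,
          Hh i j - bh j * hv' i - ah i * hv' j + ah i * bh j ≤ 0)
      ∧ (∀ i j : Fin n ⊕ Fin m,
          Hh i j - ah j * hv' i - bh i * hv' j + bh i * ah j ≤ 0)
      ∧ (∀ i j : Fin n ⊕ Fin m,
          Hh i j - ah j * hv' i - ah i * hv' j + ah i * ah j ≥ 0)
      ∧ (∀ i j : Fin n ⊕ Fin m,
          Hh i j - bh j * hv' i - bh i * hv' j + bh i * bh j ≥ 0) := by
  subst hhv hHh hah hbh
  have hW : IsMcCormick ax bx ay by' xh yh Wh := ⟨hmc1, hmc2, hmc3, hmc4⟩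
  have hH := IsMcCormick.fromBlocks (.vecMulVec hxl hxu hxl hxu) hW hW.transpose
    (.vecMulVec hyl hyu hyl hyu)
  exact ⟨⟨Sum.elim_le_elim_iff.2 ⟨hxl, hyl⟩, Sum.elim_le_elim_iff.2 ⟨hxu, hyu⟩⟩,
    hH.over₁, hH.over₂, hH.under₁, hH.under₂⟩
end

section
/- Let a₁, b₁, a₂, b₂ ∈ ℝ with b₁ − a₁ = b₂ − a₂. Then for all p₁, p₂ ∈ ℝ, RHS_Sec(p₁, p₂) ≤ RHS_Mc(p₁, p₂); that is, when the two boxes have equal width, the secant-relaxed inequality dominates the averaged McCormick inequality. -/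
/-- Right-hand side of the averaged McCormick upper inequality for `p₁p₂`
over the box `[a₁,b₁] × [a₂,b₂]`. -/
noncomputable def RHSMc (a₁ b₁ a₂ b₂ p₁ p₂ : ℝ) : ℝ :=
  ((a₂ + b₂) / 2) * p₁ + ((a₁ + b₁) / 2) * p₂ - (a₁ * b₂ + a₂ * b₁) / 2

/-- Right-hand side of the secant-relaxed inequality obtained by replacing the
concave term `-q₁²` (with `q₁ = (p₁+p₂)/2`) by its secant. -/
noncomputable def RHSSec (a₁ b₁ a₂ b₂ p₁ p₂ : ℝ) : ℝ :=
  ((a₁ + b₁ + a₂ + b₂) / 4) * p₁ + ((a₁ + b₁ + a₂ + b₂) / 4) * p₂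
    - (a₁ * b₂ + a₂ * b₁ + a₁ * b₁ + a₂ * b₂) / 4 - ((p₁ - p₂) / 2) ^ 2

theorem RHSMc_sub_RHSSec (a₁ b₁ a₂ b₂ p₁ p₂ : ℝ) :
    RHSMc a₁ b₁ a₂ b₂ p₁ p₂ - RHSSec a₁ b₁ a₂ b₂ p₁ p₂ =
      (p₁ - p₂ - (a₁ - a₂)) * (p₁ - p₂ - (b₁ - b₂)) / 4 := by
  unfold RHSMc RHSSec
  ring

/-- when the two boxes have equal width, the secant-relaxed
inequality dominates the averaged McCormick inequality. -/
theorem stmt11 (a₁ b₁ a₂ b₂ : ℝ) (hw : b₁ - a₁ = b₂ - a₂) :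
    ∀ p₁ p₂ : ℝ, RHSSec a₁ b₁ a₂ b₂ p₁ p₂ ≤ RHSMc a₁ b₁ a₂ b₂ p₁ p₂ := by
  intro p₁ p₂
  have h_shift : b₁ - b₂ = a₁ - a₂ := by linarith
  rw [← sub_nonneg, RHSMc_sub_RHSSec, h_shift, ← sq]
  positivity
end

section
/- Let a₁, b₁, a₂, b₂ ∈ ℝ. Then for all p₁, p₂ ∈ ℝ, RHS_Sec(p₁, p₂) − RHS_Mc(p₁, p₂) ≤ ((b₁ − a₁) − (b₂ − a₂))²/16, and equality holds at the midpoints p₁ = (a₁ + b₁)/2, p₂ = (a₂ + b₂)/2; that is, the maximum value of the difference between the secant-relaxed right-hand side and the averaged McCormick right-hand side is ((b₁ − a₁) − (b₂ − a₂))²/16, attained at the box midpoints. -/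
/-! The difference `RHSSec - RHSMc` depends on `(p₁, p₂)` only through `p₁ - p₂`, as a concave
quadratic; completing the square exhibits its maximum, attained where `p₁ - p₂` equals the
difference of the two box midpoints. -/

theorem RHSSec_sub_RHSMc (a₁ b₁ a₂ b₂ p₁ p₂ : ℝ) :
    RHSSec a₁ b₁ a₂ b₂ p₁ p₂ - RHSMc a₁ b₁ a₂ b₂ p₁ p₂
      = ((b₁ - a₁) - (b₂ - a₂)) ^ 2 / 16
        - ((p₁ - p₂) / 2 - ((a₁ + b₁) / 2 - (a₂ + b₂) / 2) / 2) ^ 2 := by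
  unfold RHSSec RHSMc
  ring

/-- the difference `RHSSec - RHSMc` is at most
`((b₁-a₁)-(b₂-a₂))²/16`, with equality at the box midpoints. -/
theorem stmt13 (a₁ b₁ a₂ b₂ : ℝ) :
    (∀ p₁ p₂ : ℝ,
        RHSSec a₁ b₁ a₂ b₂ p₁ p₂ - RHSMc a₁ b₁ a₂ b₂ p₁ p₂
          ≤ ((b₁ - a₁) - (b₂ - a₂)) ^ 2 / 16)
      ∧ RHSSec a₁ b₁ a₂ b₂ ((a₁ + b₁) / 2) ((a₂ + b₂) / 2)
          - RHSMc a₁ b₁ a₂ b₂ ((a₁ + b₁) / 2) ((a₂ + b₂) / 2)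
          = ((b₁ - a₁) - (b₂ - a₂)) ^ 2 / 16 := by
  refine ⟨fun p₁ p₂ => ?_, ?_⟩
  · rw [RHSSec_sub_RHSMc]
    exact sub_le_self _ (sq_nonneg _)
  · rw [RHSSec_sub_RHSMc, sub_self, zero_pow two_ne_zero, sub_zero]
end
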